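/- Under linear weights, one-sided basic moves preserve the weighted kappa: with i1 < i2 ≤ j1 < j2 and the basic move m as above, the tables n and n + m have the same row sums, the same column sums, and the same weighted kappa κ_l, where κ_l(n) = 1 - (Σ_{i≠j} u(i,j) n(i,j)/N) / (Σ_{i≠j} u(i,j) (n_{i+}/N)(n_{+j}/N)) with linear u. -/

import Mathlib

/-!
The move has zero row and column sums, so it leaves the margins, and with them the denominator
of `κ_l`, unchanged. The numerator changes by `u(i₁,j₁) + u(i₂,j₂) - u(i₁,j₂) - u(i₂,j₁)`, and
since every `i` lies below every `j`, all four weights are `(j - i)/(k - 1)` and this alternating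
sum vanishes.
-/

open Finset

section BasicMove

variable {α β : Type*} [DecidableEq α] [DecidableEq β]

def basicMove (i₁ i₂ : α) (j₁ j₂ : β) : α × β → ℤ :=
  Pi.single (i₁, j₁) 1 + Pi.single (i₂, j₂) 1 - Pi.single (i₁, j₂) 1 - Pi.single (i₂, j₁) 1

theorem basicMove_apply (i₁ i₂ : α) (j₁ j₂ : β) (p : α × β) :
    basicMove i₁ i₂ j₁ j₂ p =
      (if p = (i₁, j₁) then 1 else 0) + (if p = (i₂, j₂) then 1 else 0)
        - (if p = (i₁, j₂) then 1 else 0) - (if p = (i₂, j₁) then 1 else 0) := by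
  simp only [basicMove, Pi.add_apply, Pi.sub_apply, Pi.single_apply]

theorem sum_basicMove_row [Fintype β] (i₁ i₂ : α) (j₁ j₂ : β) (a : α) :
    ∑ b, basicMove i₁ i₂ j₁ j₂ (a, b) = 0 := by
  simp only [basicMove_apply, Prod.mk.injEq, sum_add_distrib, sum_sub_distrib, ite_and,
    sum_ite_irrel, sum_ite_eq', mem_univ, if_true]
  ring

theorem sum_basicMove_col [Fintype α] (i₁ i₂ : α) (j₁ j₂ : β) (b : β) :
    ∑ a, basicMove i₁ i₂ j₁ j₂ (a, b) = 0 := by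
  simp only [basicMove_apply, Prod.mk.injEq, sum_add_distrib, sum_sub_distrib, ite_and,
    sum_ite_eq', mem_univ, if_true]
  ring

theorem sum_mul_basicMove [Fintype α] [Fintype β] {R : Type*} [Ring R] (w : α × β → R)
    (i₁ i₂ : α) (j₁ j₂ : β) :
    ∑ p, w p * (basicMove i₁ i₂ j₁ j₂ p : R) =
      w (i₁, j₁) + w (i₂, j₂) - w (i₁, j₂) - w (i₂, j₁) := by
  simp only [basicMove, Pi.add_apply, Pi.sub_apply, Int.cast_add, Int.cast_sub, mul_add, mul_sub,
    sum_add_distrib, sum_sub_distrib, Pi.single_apply, Int.cast_ite, Int.cast_one, Int.cast_zero,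
    mul_ite, mul_one, mul_zero, sum_ite_eq', mem_univ, if_true]

end BasicMove

theorem sum_offDiag_eq_sum {α R : Type*} [Fintype α] [DecidableEq α] [Semiring R] (w : α → α → R)
    (hw : ∀ a, w a a = 0) (f : α × α → R) :
    ∑ p ∈ univ.filter (fun p : α × α => p.1 ≠ p.2), w p.1 p.2 * f p = ∑ p, w p.1 p.2 * f p :=
  sum_filter_of_ne fun p _ hp h => hp (by rw [h, hw, zero_mul])

theorem abs_sub_add_abs_sub_eq {G : Type*} [AddCommGroup G] [LinearOrder G]
    [IsOrderedAddMonoid G] {a₁ a₂ b₁ b₂ : G} (h₁₁ : a₁ ≤ b₁) (h₁₂ : a₁ ≤ b₂) (h₂₁ : a₂ ≤ b₁)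
    (h₂₂ : a₂ ≤ b₂) :
    |a₁ - b₁| + |a₂ - b₂| = |a₁ - b₂| + |a₂ - b₁| := by
  rw [abs_of_nonpos (sub_nonpos.2 h₁₁), abs_of_nonpos (sub_nonpos.2 h₁₂),
    abs_of_nonpos (sub_nonpos.2 h₂₁), abs_of_nonpos (sub_nonpos.2 h₂₂)]
  abel

theorem linear_weights_one_sided_move_kappa_invariant_general {k : ℕ}
    (n : Fin k × Fin k → ℕ) (N : ℕ)
    (i₁ i₂ j₁ j₂ : Fin k) (h12 : i₁ < i₂) (h2j : i₂ ≤ j₁) (hj12 : j₁ < j₂) :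
    let u : Fin k → Fin k → ℝ := fun a b => |(a : ℝ) - (b : ℝ)| / ((k : ℝ) - 1)
    let m : Fin k × Fin k → ℤ := fun p =>
      (if p = (i₁, j₁) then 1 else 0) + (if p = (i₂, j₂) then 1 else 0)
        - (if p = (i₁, j₂) then 1 else 0) - (if p = (i₂, j₁) then 1 else 0)
    let row : (Fin k × Fin k → ℤ) → Fin k → ℤ := fun x a => ∑ b : Fin k, x (a, b)
    let col : (Fin k × Fin k → ℤ) → Fin k → ℤ := fun x b => ∑ a : Fin k, x (a, b)
    let κ : (Fin k × Fin k → ℤ) → ℝ := fun x =>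
      1 - (∑ p ∈ Finset.univ.filter (fun p : Fin k × Fin k => p.1 ≠ p.2),
              u p.1 p.2 * (x p : ℝ)) /
          ((N : ℝ) * ∑ p ∈ Finset.univ.filter (fun p : Fin k × Fin k => p.1 ≠ p.2),
              u p.1 p.2 * ((row x p.1 : ℝ) / (N : ℝ)) * ((col x p.2 : ℝ) / (N : ℝ)))
    let n' : Fin k × Fin k → ℤ := fun p => (n p : ℤ) + m p
    ((N : ℝ) * ∑ p ∈ Finset.univ.filter (fun p : Fin k × Fin k => p.1 ≠ p.2),
        u p.1 p.2 * ((row (fun q => (n q : ℤ)) p.1 : ℝ) / (N : ℝ))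
          * ((col (fun q => (n q : ℤ)) p.2 : ℝ) / (N : ℝ))) ≠ 0 →
    (∀ a : Fin k, row n' a = row (fun q => (n q : ℤ)) a) ∧
    (∀ b : Fin k, col n' b = col (fun q => (n q : ℤ)) b) ∧
    κ n' = κ (fun q => (n q : ℤ)) := by
  intro u m row col κ n' _
  have hm : m = basicMove i₁ i₂ j₁ j₂ := funext fun p => (basicMove_apply i₁ i₂ j₁ j₂ p).symm
  have hrow (a : Fin k) : row n' a = row (fun q => (n q : ℤ)) a := by
    simp only [row, n', sum_add_distrib, hm, sum_basicMove_row, add_zero]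
  have hcol (b : Fin k) : col n' b = col (fun q => (n q : ℤ)) b := by
    simp only [col, n', sum_add_distrib, hm, sum_basicMove_col, add_zero]
  have hmove : u i₁ j₁ + u i₂ j₂ - u i₁ j₂ - u i₂ j₁ = 0 := by
    have hcast {a b : Fin k} (h : a ≤ b) : (a : ℝ) ≤ b := by exact_mod_cast h
    have hj : j₁ ≤ j₂ := hj12.le
    have habs := abs_sub_add_abs_sub_eq (hcast (h12.le.trans h2j))
      (hcast (h12.le.trans (h2j.trans hj))) (hcast h2j) (hcast (h2j.trans hj))
    linear_combination habs / ((k : ℝ) - 1)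
  have hnum : ∑ p ∈ univ.filter (fun p : Fin k × Fin k => p.1 ≠ p.2), u p.1 p.2 * (n' p : ℝ) =
      ∑ p ∈ univ.filter (fun p : Fin k × Fin k => p.1 ≠ p.2), u p.1 p.2 * ((n p : ℤ) : ℝ) := by
    have hu (a : Fin k) : u a a = 0 := by simp [u]
    simp only [n', Int.cast_add, mul_add, sum_add_distrib, hm]
    rw [sum_offDiag_eq_sum u hu fun p => (basicMove i₁ i₂ j₁ j₂ p : ℝ),
      sum_mul_basicMove (fun p => u p.1 p.2), hmove, add_zero]
  refine ⟨hrow, hcol, ?_⟩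
  simp only [κ, hrow, hcol, hnum]

/-- Under linear weights, one-sided basic moves preserve the weighted kappa: for
`i₁ < i₂ ≤ j₁ < j₂` and the basic move `m` with `+1` at `(i₁,j₁)`, `(i₂,j₂)` and
`-1` at `(i₁,j₂)`, `(i₂,j₁)`, the tables `n` and `n + m` have the same row sums,
the same column sums, and the same weighted kappa `κ_l`. -/
theorem linear_weights_one_sided_move_kappa_invariant {k : ℕ}
    (n : Fin k × Fin k → ℕ) (N : ℕ) (hN : 0 < N)
    (htot : ∑ p : Fin k × Fin k, n p = N)
    (i₁ i₂ j₁ j₂ : Fin k) (h12 : i₁ < i₂) (h2j : i₂ ≤ j₁) (hj12 : j₁ < j₂)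
    (hpos1 : 0 < n (i₁, j₂)) (hpos2 : 0 < n (i₂, j₁)) :
    let u : Fin k → Fin k → ℝ := fun a b => |(a : ℝ) - (b : ℝ)| / ((k : ℝ) - 1)
    let m : Fin k × Fin k → ℤ := fun p =>
      (if p = (i₁, j₁) then 1 else 0) + (if p = (i₂, j₂) then 1 else 0)
        - (if p = (i₁, j₂) then 1 else 0) - (if p = (i₂, j₁) then 1 else 0)
    let row : (Fin k × Fin k → ℤ) → Fin k → ℤ := fun x a => ∑ b : Fin k, x (a, b)
    let col : (Fin k × Fin k → ℤ) → Fin k → ℤ := fun x b => ∑ a : Fin k, x (a, b)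
    let κ : (Fin k × Fin k → ℤ) → ℝ := fun x =>
      1 - (∑ p ∈ Finset.univ.filter (fun p : Fin k × Fin k => p.1 ≠ p.2),
              u p.1 p.2 * (x p : ℝ)) /
          ((N : ℝ) * ∑ p ∈ Finset.univ.filter (fun p : Fin k × Fin k => p.1 ≠ p.2),
              u p.1 p.2 * ((row x p.1 : ℝ) / (N : ℝ)) * ((col x p.2 : ℝ) / (N : ℝ)))
    let n' : Fin k × Fin k → ℤ := fun p => (n p : ℤ) + m p
    ((N : ℝ) * ∑ p ∈ Finset.univ.filter (fun p : Fin k × Fin k => p.1 ≠ p.2),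
        u p.1 p.2 * ((row (fun q => (n q : ℤ)) p.1 : ℝ) / (N : ℝ))
          * ((col (fun q => (n q : ℤ)) p.2 : ℝ) / (N : ℝ))) ≠ 0 →
    (∀ a : Fin k, row n' a = row (fun q => (n q : ℤ)) a) ∧
    (∀ b : Fin k, col n' b = col (fun q => (n q : ℤ)) b) ∧
    κ n' = κ (fun q => (n q : ℤ)) :=
  linear_weights_one_sided_move_kappa_invariant_general n N i₁ i₂ j₁ j₂ h12 h2j hj12
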